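/- arXiv:1511.06132 — 4 statements merged into one kernel-verified Lean document; each statement's English description precedes it below -/
import Mathlib

section
/- Let G be a connected simple graph on n ≥ 2 vertices with maximum degree Δ₁ and second maximum degree Δ₂. Then the distance Estrada index satisfies DEE(G) ≥ e^{√((2n-2-Δ₁)(2n-2-Δ₂))} + (n-1)·e^{-√((2-Δ₁/(n-1))(2-Δ₂/(n-1)))}, with equality if and only if G is the complete graph K_n. -/
/-!
Let `ρ` be the largest distance eigenvalue. Since `D(G)` has zero trace, the other `n - 1`
eigenvalues sum to `-ρ`, so Jensen's inequality for `exp` gives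
`DEE(G) ≥ e^ρ + (n - 1) e^{-ρ/(n-1)}`, an increasing function of `ρ ≥ 0`. The all-ones vector
bounds `ρ` below by the average row sum of `D(G)`; as non-adjacent vertices are at distance at
least `2`, this average is at least `((2n-2-Δ₁) + (n-1)(2n-2-Δ₂)) / n`, and AM-GM bounds that by
`√((2n-2-Δ₁)(2n-2-Δ₂))`. At equality the other eigenvalues all equal `-ρ/(n-1)` and `ρ` is the
average row sum; then `∑ λᵢ² = ∑ D(G)ᵢⱼ²` is the equality case of Jensen's inequality for `x²`
over the off-diagonal entries, which are therefore all equal, hence all `1`.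
-/

namespace DistanceEstrada

variable {n : ℕ}

/-- The distance matrix of a simple graph on `Fin n`. -/
noncomputable def distMatrix (G : SimpleGraph (Fin n)) : Matrix (Fin n) (Fin n) ℝ :=
  fun i j => (G.dist i j : ℝ)

lemma distMatrix_isHermitian (G : SimpleGraph (Fin n)) : (distMatrix G).IsHermitian := by
  unfold Matrix.IsHermitian
  ext i j
  simp [distMatrix, Matrix.conjTranspose_apply, SimpleGraph.dist_comm]

/-- The distance eigenvalues of `G` (in no particular order). -/
noncomputable def distEig (G : SimpleGraph (Fin n)) : Fin n → ℝ :=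
  (distMatrix_isHermitian G).eigenvalues

/-- The distance Estrada index. -/
noncomputable def DEE (G : SimpleGraph (Fin n)) : ℝ :=
  ∑ i, Real.exp (distEig G i)

open Classical in
/-- The adjacency matrix of `G` over `ℝ`. -/
noncomputable def adjMat (G : SimpleGraph (Fin n)) : Matrix (Fin n) (Fin n) ℝ :=
  fun i j => if G.Adj i j then 1 else 0

lemma adjMat_isHermitian (G : SimpleGraph (Fin n)) : (adjMat G).IsHermitian := by
  unfold Matrix.IsHermitian
  ext i j
  simp only [adjMat, Matrix.conjTranspose_apply, star_trivial]
  rw [SimpleGraph.adj_comm]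

/-- The adjacency eigenvalues of `G` (in no particular order). -/
noncomputable def adjEig (G : SimpleGraph (Fin n)) : Fin n → ℝ :=
  (adjMat_isHermitian G).eigenvalues

/-- The Estrada index. -/
noncomputable def EE (G : SimpleGraph (Fin n)) : ℝ :=
  ∑ i, Real.exp (adjEig G i)

end DistanceEstrada

open Finset Real Matrix

section Jensen

variable {ι : Type*}

theorem ConvexOn.card_mul_le_sum {D : Set ℝ} {g : ℝ → ℝ} (hg : ConvexOn ℝ D g)
    {s : Finset ι} {x : ι → ℝ} {c : ℝ} (hx : ∀ i ∈ s, x i ∈ D)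
    (hsum : ∑ i ∈ s, x i = #s * c) : #s * g c ≤ ∑ i ∈ s, g (x i) := by
  rcases s.eq_empty_or_nonempty with rfl | hs
  · simp
  have hcard : (0 : ℝ) < #s := by exact_mod_cast hs.card_pos
  have hmean : ∑ i ∈ s, (#s : ℝ)⁻¹ • x i = c := by
    rw [← smul_sum, hsum, smul_eq_mul, inv_mul_cancel_left₀ hcard.ne']
  have hjensen := hg.map_sum_le (fun _ _ => inv_nonneg.2 hcard.le) (by simp [hcard.ne']) hx
  rw [hmean, ← smul_sum, smul_eq_mul] at hjensen
  calc (#s : ℝ) * g c ≤ #s * ((#s : ℝ)⁻¹ * ∑ i ∈ s, g (x i)) := by gcongr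
    _ = ∑ i ∈ s, g (x i) := mul_inv_cancel_left₀ hcard.ne' _

theorem StrictConvexOn.eq_of_sum_eq_card_mul {D : Set ℝ} {g : ℝ → ℝ}
    (hg : StrictConvexOn ℝ D g) {s : Finset ι} {x : ι → ℝ} {c : ℝ} (hx : ∀ i ∈ s, x i ∈ D)
    (hsum : ∑ i ∈ s, x i = #s * c) (heq : ∑ i ∈ s, g (x i) = #s * g c) :
    ∀ i ∈ s, x i = c := by
  rcases s.eq_empty_or_nonempty with rfl | hs
  · simp
  have hcard : (0 : ℝ) < #s := by exact_mod_cast hs.card_pos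
  have hmean : ∑ i ∈ s, (#s : ℝ)⁻¹ • x i = c := by
    rw [← smul_sum, hsum, smul_eq_mul, inv_mul_cancel_left₀ hcard.ne']
  have hjensen : g (∑ i ∈ s, (#s : ℝ)⁻¹ • x i) = ∑ i ∈ s, (#s : ℝ)⁻¹ • g (x i) := by
    rw [hmean, ← smul_sum, heq, smul_eq_mul, inv_mul_cancel_left₀ hcard.ne']
  rwa [hg.map_sum_eq_iff (fun _ _ => inv_pos.2 hcard) (by simp [hcard.ne']) hx, hmean]
    at hjensen

variable [Fintype ι] [DecidableEq ι]

theorem sum_erase_eq_card_mul_of_sum_eq_zero {μ : ι → ℝ} (hμ : ∑ i, μ i = 0) (i₀ : ι)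
    (hι : 1 < Fintype.card ι) :
    ∑ i ∈ univ.erase i₀, μ i = #(univ.erase i₀) * -(μ i₀ / (Fintype.card ι - 1)) := by
  have hcard : (#(univ.erase i₀) : ℝ) = Fintype.card ι - 1 := by
    rw [card_erase_of_mem (mem_univ _), card_univ, Nat.cast_pred (by omega)]
  have hpos : (0 : ℝ) < Fintype.card ι - 1 := by
    rw [sub_pos]; exact_mod_cast hι
  rw [hcard, mul_neg, mul_div_cancel₀ _ hpos.ne', eq_neg_iff_add_eq_zero, add_comm,
    add_sum_erase _ _ (mem_univ _), hμ]

theorem sum_eq_add_mul_of_eq_on_erase (g : ℝ → ℝ) {μ : ι → ℝ} {i₀ : ι} {c : ℝ}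
    (hι : 1 ≤ Fintype.card ι) (h : ∀ i ≠ i₀, μ i = c) :
    ∑ i, g (μ i) = g (μ i₀) + (Fintype.card ι - 1) * g c := by
  rw [← add_sum_erase _ _ (mem_univ i₀),
    sum_congr rfl fun i hi => by rw [h i (ne_of_mem_erase hi)], sum_const,
    card_erase_of_mem (mem_univ _), card_univ, nsmul_eq_mul, Nat.cast_pred hι]

theorem ConvexOn.add_mul_le_sum_of_sum_eq_zero {g : ℝ → ℝ} (hg : ConvexOn ℝ Set.univ g)
    {μ : ι → ℝ} (hμ : ∑ i, μ i = 0) (i₀ : ι) (hι : 1 < Fintype.card ι) :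
    g (μ i₀) + (Fintype.card ι - 1) * g (-(μ i₀ / (Fintype.card ι - 1))) ≤ ∑ i, g (μ i) := by
  have := hg.card_mul_le_sum (fun _ _ => trivial) (sum_erase_eq_card_mul_of_sum_eq_zero hμ i₀ hι)
  rw [card_erase_of_mem (mem_univ _), card_univ, Nat.cast_pred (by omega)] at this
  rw [← add_sum_erase _ _ (mem_univ i₀)]
  gcongr

theorem StrictConvexOn.sum_eq_add_mul_iff_of_sum_eq_zero {g : ℝ → ℝ}
    (hg : StrictConvexOn ℝ Set.univ g) {μ : ι → ℝ} (hμ : ∑ i, μ i = 0) (i₀ : ι)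
    (hι : 1 < Fintype.card ι) :
    ∑ i, g (μ i) = g (μ i₀) + (Fintype.card ι - 1) * g (-(μ i₀ / (Fintype.card ι - 1))) ↔
      ∀ i ≠ i₀, μ i = -(μ i₀ / (Fintype.card ι - 1)) := by
  refine ⟨fun heq i hi => ?_, sum_eq_add_mul_of_eq_on_erase g hι.le⟩
  refine hg.eq_of_sum_eq_card_mul (fun _ _ => trivial)
    (sum_erase_eq_card_mul_of_sum_eq_zero hμ i₀ hι) ?_ i (mem_erase.2 ⟨hi, mem_univ i⟩)
  rw [card_erase_of_mem (mem_univ _), card_univ, Nat.cast_pred (by omega)]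
  rw [← add_sum_erase _ _ (mem_univ i₀)] at heq
  linarith

end Jensen

theorem mul_sqrt_mul_le_add {a b m : ℝ} (ha : 0 ≤ a) (hab : a ≤ b) (hm : 2 ≤ m) :
    m * √(a * b) ≤ a + (m - 1) * b := by
  have hamgm : 2 * √(a * b) ≤ a + b := by
    rw [sqrt_mul ha]
    nlinarith [sq_sqrt ha, sq_sqrt (ha.trans hab), sq_nonneg (√a - √b)]
  nlinarith

theorem strictMonoOn_exp_add_mul_exp_neg_div {m : ℝ} (hm : 0 < m) :
    StrictMonoOn (fun x => exp x + m * exp (-(x / m))) (Set.Ici 0) := by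
  have hderiv : ∀ x, HasDerivAt (fun x => exp x + m * exp (-(x / m)))
      (exp x - exp (-(x / m))) x := by
    intro x
    have hlin : HasDerivAt (fun x => -(x / m)) (-(1 / m)) x :=
      ((hasDerivAt_id x).div_const m).neg
    refine ((hasDerivAt_exp x).add (hlin.exp.const_mul m)).congr_deriv ?_
    field_simp
    ring
  refine strictMonoOn_of_deriv_pos (convex_Ici 0) ?_ fun x hx => ?_
  · exact fun x _ => (hderiv x).continuousAt.continuousWithinAt
  · rw [interior_Ici] at hx
    rw [(hderiv x).deriv, sub_pos, exp_lt_exp]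
    have : 0 < x / m := div_pos hx hm
    linarith [show (0:ℝ) < x from hx]

theorem Finset.sum_offDiag_univ_eq_sum_sum {ι M : Type*} [Fintype ι] [DecidableEq ι]
    [AddCommMonoid M] {f : ι → ι → M} (hf : ∀ i, f i i = 0) :
    ∑ p ∈ (univ : Finset ι).offDiag, f p.1 p.2 = ∑ i, ∑ j, f i j := by
  rw [← Fintype.sum_prod_type']
  refine sum_subset (subset_univ _) fun p _ hp => ?_
  obtain ⟨i, j⟩ := p
  obtain rfl : i = j := by simpa using hp
  exact hf i

theorem sqrt_two_sub_div_mul_two_sub_div {n a b : ℝ} (hn : 1 < n) :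
    √((2 - a / (n - 1)) * (2 - b / (n - 1))) = √((2 * n - 2 - a) * (2 * n - 2 - b)) / (n - 1) := by
  have hsq : (2 - a / (n - 1)) * (2 - b / (n - 1)) =
      (2 * n - 2 - a) * (2 * n - 2 - b) / (n - 1) ^ 2 := by
    have : n - 1 ≠ 0 := by linarith
    field_simp
  rw [hsq, sqrt_div' _ (sq_nonneg _), sqrt_sq (by linarith)]

namespace Matrix.IsHermitian

variable {ι : Type*} [Fintype ι] [DecidableEq ι]

theorem trace_cfc {𝕜 : Type*} [RCLike 𝕜] {A : Matrix ι ι 𝕜} (hA : A.IsHermitian) (f : ℝ → ℝ) :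
    (cfc f A).trace = ∑ i, (f (hA.eigenvalues i) : 𝕜) := by
  rw [hA.cfc_eq, IsHermitian.cfc, Unitary.conjStarAlgAut_apply, trace_mul_cycle,
    Unitary.coe_star_mul_self, one_mul, trace_diagonal]
  rfl

variable {A : Matrix ι ι ℝ}

theorem sum_eigenvalues_eq_zero (hA : A.IsHermitian) (hdiag : ∀ i, A i i = 0) :
    ∑ i, hA.eigenvalues i = 0 := by
  simpa [trace, hdiag] using hA.trace_eq_sum_eigenvalues.symm

theorem sum_eigenvalues_sq (hA : A.IsHermitian) :
    ∑ i, hA.eigenvalues i ^ 2 = ∑ i, ∑ j, A i j ^ 2 := by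
  have hsq := hA.trace_cfc (· ^ 2)
  rw [cfc_pow_id (R := ℝ) A 2 hA.isSelfAdjoint] at hsq
  simp only [RCLike.ofReal_real_eq_id, id] at hsq
  rw [← hsq, sq, trace]
  refine sum_congr rfl fun i _ => sum_congr rfl fun j _ => ?_
  simp [sq, ← hA.apply j i]

theorem posSemidef_smul_one_sub {c : ℝ} (hA : A.IsHermitian) (hc : ∀ i, hA.eigenvalues i ≤ c) :
    (c • (1 : Matrix ι ι ℝ) - A).PosSemidef := by
  rw [posSemidef_iff_isHermitian_and_spectrum_nonneg]
  refine ⟨(isHermitian_one.smul (IsSelfAdjoint.all c)).sub hA, ?_⟩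
  rw [← Algebra.algebraMap_eq_smul_one, ← spectrum.singleton_sub_eq,
    hA.spectrum_real_eq_range_eigenvalues]
  rintro _ ⟨_, rfl, _, ⟨i, rfl⟩, rfl⟩
  exact sub_nonneg.2 (hc i)

theorem sum_sum_le_card_mul {c : ℝ} (hA : A.IsHermitian) (hc : ∀ i, hA.eigenvalues i ≤ c) :
    ∑ i, ∑ j, A i j ≤ Fintype.card ι * c := by
  have := (hA.posSemidef_smul_one_sub hc).re_dotProduct_nonneg (fun _ => 1)
  simpa [dotProduct, mulVec, one_apply, mul_comm] using this

theorem apply_eq_of_eigenvalues_eq (hA : A.IsHermitian) (hdiag : ∀ i, A i i = 0) {i₀ : ι}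
    (hι : 1 < Fintype.card ι)
    (hsum : ∑ i, ∑ j, A i j = Fintype.card ι * hA.eigenvalues i₀)
    (hrest : ∀ i ≠ i₀, hA.eigenvalues i = -(hA.eigenvalues i₀ / (Fintype.card ι - 1)))
    {i j : ι} (hij : i ≠ j) : A i j = hA.eigenvalues i₀ / (Fintype.card ι - 1) := by
  have hn : (1 : ℝ) < Fintype.card ι := by exact_mod_cast hι
  set n : ℝ := (Fintype.card ι : ℝ)
  set x := hA.eigenvalues i₀ / (n - 1)
  have hρ : hA.eigenvalues i₀ = (n - 1) * x := (mul_div_cancel₀ _ (sub_pos.2 hn).ne').symm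
  have hcard : (#(univ : Finset ι).offDiag : ℝ) = n * (n - 1) := by
    rw [offDiag_card, card_univ, Nat.cast_sub (Nat.le_mul_self _), Nat.cast_mul]; ring
  have hsq : ∑ i, hA.eigenvalues i ^ 2 = hA.eigenvalues i₀ ^ 2 + (n - 1) * x ^ 2 := by
    rw [sum_eq_add_mul_of_eq_on_erase (· ^ 2) hι.le hrest, neg_sq]
  refine (Even.strictConvexOn_pow even_two two_ne_zero).eq_of_sum_eq_card_mul
    (s := univ.offDiag) (x := fun p => A p.1 p.2) (fun _ _ => trivial) ?_ ?_ (i, j) (by simp [hij])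
  · rw [sum_offDiag_univ_eq_sum_sum hdiag, hcard, hsum, hρ]
    ring
  · rw [sum_offDiag_univ_eq_sum_sum (f := fun i j => A i j ^ 2) (by simp [hdiag]), hcard,
      ← hA.sum_eigenvalues_sq, hsq, hρ]
    ring

theorem eigenvalues_of_apply_eq_ite (hA : A.IsHermitian)
    (hJ : ∀ i j, A i j = if i = j then 0 else 1) (hι : 1 < Fintype.card ι) {i₀ : ι}
    (hi₀ : ∀ i, hA.eigenvalues i ≤ hA.eigenvalues i₀) :
    hA.eigenvalues i₀ = Fintype.card ι - 1 ∧ ∀ i ≠ i₀, hA.eigenvalues i = -1 := by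
  have hn : (0 : ℝ) < Fintype.card ι - 1 := by
    rw [sub_pos]; exact_mod_cast hι
  have hμ := hA.sum_eigenvalues_eq_zero fun i => by simp [hJ]
  have hsum : ∑ i, ∑ j, A i j = Fintype.card ι * (Fintype.card ι - 1) := by
    simp only [hJ, sum_ite, sum_const_zero, zero_add, sum_const, filter_ne,
      card_erase_of_mem (mem_univ _), card_univ, nsmul_eq_mul, mul_one, Nat.cast_pred hι.le]
  have hsq : ∑ i, hA.eigenvalues i ^ 2 = Fintype.card ι * (Fintype.card ι - 1) := by
    rw [hA.sum_eigenvalues_sq, ← hsum]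
    simp only [hJ, ite_pow, zero_pow two_ne_zero, one_pow]
  have hsqconv : StrictConvexOn ℝ Set.univ (· ^ 2 : ℝ → ℝ) :=
    Even.strictConvexOn_pow even_two two_ne_zero
  have hle := hsqconv.convexOn.add_mul_le_sum_of_sum_eq_zero hμ i₀ hι
  have hge : (Fintype.card ι : ℝ) - 1 ≤ hA.eigenvalues i₀ :=
    le_of_mul_le_mul_left (hsum ▸ hA.sum_sum_le_card_mul hi₀) (by linarith)
  rw [hsq, neg_sq, div_pow] at hle
  field_simp at hle
  rw [sub_add_cancel, mul_comm] at hle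
  have hρ : hA.eigenvalues i₀ = Fintype.card ι - 1 :=
    le_antisymm ((pow_le_pow_iff_left₀ (hn.le.trans hge) hn.le two_ne_zero).1
      (le_of_mul_le_mul_left hle (by linarith))) hge
  have hrest := (hsqconv.sum_eq_add_mul_iff_of_sum_eq_zero hμ i₀ hι).1
    (by rw [hsq, hρ, div_self hn.ne']; ring)
  exact ⟨hρ, fun i hi => by rw [hrest i hi, hρ, div_self hn.ne']⟩

end Matrix.IsHermitian

namespace SimpleGraph

variable {V : Type*} {G : SimpleGraph V}

theorem eq_top_of_dist_eq (hconn : G.Connected) {x : ℝ} (h : ∀ i j, i ≠ j → (G.dist i j : ℝ) = x) :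
    G = ⊤ := by
  ext i j
  refine ⟨Adj.ne, fun hij => ?_⟩
  obtain ⟨p⟩ := hconn.preconnected i j
  cases p with
  | nil => exact absurd rfl hij
  | cons hadj _ =>
    have hx := (h i j hij).trans (h _ _ hadj.ne).symm
    rw [dist_eq_one_iff_adj.2 hadj, Nat.cast_one, Nat.cast_eq_one, dist_eq_one_iff_adj] at hx
    exact hx

variable [Fintype V] [DecidableRel G.Adj]

theorem Connected.two_mul_card_sub_one_le_sum_dist_add_degree (hconn : G.Connected) (i : V) :
    2 * (Fintype.card V - 1) ≤ ∑ j, G.dist i j + G.degree i := by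
  classical
  have hcard : 2 * (Fintype.card V - 1) = ∑ j, if j = i then 0 else 2 := by
    simp [sum_ite, filter_ne', card_erase_of_mem, mul_comm]
  have hdeg : G.degree i = ∑ j, if G.Adj i j then 1 else 0 := by
    simp [sum_boole, degree, neighborFinset_eq_filter]
  rw [hcard, hdeg, ← sum_add_distrib]
  refine sum_le_sum fun j _ => ?_
  by_cases hji : j = i
  · simp [hji]
  have hpos := hconn.pos_dist_of_ne (Ne.symm hji)
  by_cases hadj : G.Adj i j
  · simp [hji, hadj, dist_eq_one_iff_adj.2 hadj]
  · have := mt dist_eq_one_iff_adj.1 hadj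
    simp only [hji, hadj, if_false]
    omega

theorem Connected.card_mul_sqrt_le_sum_sum_dist (hconn : G.Connected) {u v : V} (hvu : v ≠ u)
    (hv : G.degree v ≤ G.degree u) (hle : ∀ w ≠ u, G.degree w ≤ G.degree v) :
    (Fintype.card V : ℝ) * √((2 * Fintype.card V - 2 - G.degree u) *
      (2 * Fintype.card V - 2 - G.degree v)) ≤ ∑ i, ∑ j, (G.dist i j : ℝ) := by
  classical
  set N := Fintype.card V
  have hN : 2 ≤ N := Fintype.one_lt_card_iff.2 ⟨u, v, hvu.symm⟩
  have hu : G.degree u + 1 ≤ N := G.degree_lt_card_verts u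
  have hdeg : ∑ w, G.degree w ≤ G.degree u + (N - 1) * G.degree v := by
    rw [← add_sum_erase _ _ (mem_univ u)]
    gcongr
    calc ∑ w ∈ univ.erase u, G.degree w ≤ ∑ w ∈ univ.erase u, G.degree v :=
          sum_le_sum fun w hw => hle w (ne_of_mem_erase hw)
      _ = (N - 1) * G.degree v := by simp [N, card_erase_of_mem]
  have hrow : N * (2 * (N - 1)) ≤ ∑ i, ∑ j, G.dist i j + ∑ w, G.degree w := by
    have := sum_le_sum fun i (_ : i ∈ univ) => hconn.two_mul_card_sub_one_le_sum_dist_add_degree i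
    rwa [sum_const, card_univ, smul_eq_mul, sum_add_distrib] at this
  have hreal := (Nat.cast_le (α := ℝ)).2 (hrow.trans (Nat.add_le_add_left hdeg _))
  push_cast [Nat.cast_pred (by omega : 0 < N)] at hreal
  have hu' : (G.degree u : ℝ) + 1 ≤ N := by exact_mod_cast hu
  have hv' : (G.degree v : ℝ) ≤ G.degree u := by exact_mod_cast hv
  calc _ ≤ (2 * N - 2 - G.degree u : ℝ) + (N - 1) * (2 * N - 2 - G.degree v) :=
        mul_sqrt_mul_le_add (by linarith) (by linarith) (by exact_mod_cast hN)
    _ ≤ _ := by linarith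

end SimpleGraph

namespace DistanceEstrada

variable {n : ℕ}

theorem sum_distEig_eq_zero (G : SimpleGraph (Fin n)) : ∑ i, distEig G i = 0 :=
  (distMatrix_isHermitian G).sum_eigenvalues_eq_zero fun i => by simp [distMatrix]

theorem exp_add_mul_exp_le_DEE (hn : 2 ≤ n) (G : SimpleGraph (Fin n)) (i₀ : Fin n) :
    exp (distEig G i₀) + (n - 1) * exp (-(distEig G i₀ / (n - 1))) ≤ DEE G := by
  simpa [DEE] using convexOn_exp.add_mul_le_sum_of_sum_eq_zero (sum_distEig_eq_zero G) i₀
    (by rw [Fintype.card_fin]; omega)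

theorem DEE_eq_exp_add_mul_exp_iff (hn : 2 ≤ n) (G : SimpleGraph (Fin n)) (i₀ : Fin n) :
    DEE G = exp (distEig G i₀) + (n - 1) * exp (-(distEig G i₀ / (n - 1))) ↔
      ∀ i ≠ i₀, distEig G i = -(distEig G i₀ / (n - 1)) := by
  simpa [DEE] using strictConvexOn_exp.sum_eq_add_mul_iff_of_sum_eq_zero (sum_distEig_eq_zero G) i₀
    (by rw [Fintype.card_fin]; omega)

theorem distMatrix_top_apply (i j : Fin n) :
    distMatrix (⊤ : SimpleGraph (Fin n)) i j = if i = j then 0 else 1 := by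
  split_ifs with h
  · simp [distMatrix, h]
  · simp [distMatrix, SimpleGraph.dist_eq_one_iff_adj.2 ((SimpleGraph.top_adj i j).2 h)]

theorem sum_dist_le_mul_distEig (G : SimpleGraph (Fin n)) {i₀ : Fin n}
    (hi₀ : ∀ i, distEig G i ≤ distEig G i₀) :
    ∑ i, ∑ j, (G.dist i j : ℝ) ≤ n * distEig G i₀ := by
  simpa [distMatrix] using (distMatrix_isHermitian G).sum_sum_le_card_mul hi₀

theorem eq_top_of_sum_dist_eq (hn : 2 ≤ n) {G : SimpleGraph (Fin n)} (hconn : G.Connected)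
    {i₀ : Fin n} (hsum : ∑ i, ∑ j, (G.dist i j : ℝ) = n * distEig G i₀)
    (hrest : ∀ i ≠ i₀, distEig G i = -(distEig G i₀ / (n - 1))) : G = ⊤ := by
  refine SimpleGraph.eq_top_of_dist_eq hconn (x := distEig G i₀ / (n - 1)) fun i j hij => ?_
  have := (distMatrix_isHermitian G).apply_eq_of_eigenvalues_eq
    (fun i => by simp [distMatrix]) (by rw [Fintype.card_fin]; omega)
    (by rw [Fintype.card_fin]; exact hsum) (by rw [Fintype.card_fin]; exact hrest) hij
  rwa [Fintype.card_fin] at this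

theorem degree_top_fin [DecidableRel (⊤ : SimpleGraph (Fin n)).Adj] (w : Fin n) :
    (⊤ : SimpleGraph (Fin n)).degree w = n - 1 := by
  convert SimpleGraph.complete_graph_degree w
  simp

theorem DEE_top (hn : 2 ≤ n) :
    DEE (⊤ : SimpleGraph (Fin n)) = exp (n - 1) + (n - 1) * exp (-1) := by
  have : NeZero n := ⟨by omega⟩
  obtain ⟨i₀, hi₀⟩ := Finite.exists_max (distEig (⊤ : SimpleGraph (Fin n)))
  obtain ⟨hρ, hrest⟩ := (distMatrix_isHermitian ⊤).eigenvalues_of_apply_eq_ite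
    distMatrix_top_apply (by rw [Fintype.card_fin]; omega) hi₀
  have := sum_eq_add_mul_of_eq_on_erase exp (by rw [Fintype.card_fin]; omega) hrest
  rwa [hρ, Fintype.card_fin] at this

/-- **Theorem 3 (Shang).** For a connected graph `G` on `n ≥ 2` vertices with maximum degree
`Δ₁` and second maximum degree `Δ₂`,
`DEE(G) ≥ e^{√((2n-2-Δ₁)(2n-2-Δ₂))} + (n-1) e^{-√((2-Δ₁/(n-1))(2-Δ₂/(n-1)))}`,
with equality iff `G = Kₙ`. -/
theorem distance_estrada_lower_bound_degrees {n : ℕ} (hn : 2 ≤ n)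
    (G : SimpleGraph (Fin n)) [DecidableRel G.Adj] (hconn : G.Connected)
    (Δ₁ Δ₂ : ℕ)
    (hΔ : ∃ u : Fin n, G.degree u = Δ₁ ∧ (∀ w, G.degree w ≤ Δ₁) ∧
      (∃ v, v ≠ u ∧ G.degree v = Δ₂) ∧ ∀ w, w ≠ u → G.degree w ≤ Δ₂) :
    Real.exp (Real.sqrt ((2 * (n : ℝ) - 2 - Δ₁) * (2 * (n : ℝ) - 2 - Δ₂))) +
      ((n : ℝ) - 1) * Real.exp (-Real.sqrt ((2 - (Δ₁ : ℝ) / ((n : ℝ) - 1)) *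
        (2 - (Δ₂ : ℝ) / ((n : ℝ) - 1)))) ≤ DEE G ∧
    (Real.exp (Real.sqrt ((2 * (n : ℝ) - 2 - Δ₁) * (2 * (n : ℝ) - 2 - Δ₂))) +
      ((n : ℝ) - 1) * Real.exp (-Real.sqrt ((2 - (Δ₁ : ℝ) / ((n : ℝ) - 1)) *
        (2 - (Δ₂ : ℝ) / ((n : ℝ) - 1)))) = DEE G ↔ G = ⊤) := by
  obtain ⟨u, rfl, hu, ⟨v, hvu, rfl⟩, hv⟩ := hΔ
  have : NeZero n := ⟨by omega⟩
  have hn1 : (1 : ℝ) < n := by exact_mod_cast hn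
  obtain ⟨i₀, hi₀⟩ := Finite.exists_max (distEig G)
  rw [sqrt_two_sub_div_mul_two_sub_div hn1]
  set s := √((2 * (n : ℝ) - 2 - G.degree u) * (2 * (n : ℝ) - 2 - G.degree v))
  have hs : n * s ≤ ∑ i, ∑ j, (G.dist i j : ℝ) := by
    simpa using hconn.card_mul_sqrt_le_sum_sum_dist hvu (hu v) hv
  have hρ := sum_dist_le_mul_distEig G hi₀
  have hs0 : 0 ≤ s := sqrt_nonneg _
  have hsρ : s ≤ distEig G i₀ := le_of_mul_le_mul_left (hs.trans hρ) (by positivity)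
  have hmono := strictMonoOn_exp_add_mul_exp_neg_div (sub_pos.2 hn1)
  have hDEE := exp_add_mul_exp_le_DEE hn G i₀
  refine ⟨(hmono.monotoneOn hs0 (hs0.trans hsρ) hsρ).trans hDEE, fun heq => ?_, ?_⟩
  · have hsρ' : s = distEig G i₀ := hsρ.eq_or_lt.resolve_right fun hlt =>
      (hmono hs0 (hs0.trans hsρ) hlt).not_ge (hDEE.trans heq.ge)
    exact eq_top_of_sum_dist_eq hn hconn (le_antisymm hρ (hsρ' ▸ hs))
      ((DEE_eq_exp_add_mul_exp_iff hn G i₀).1 (by rw [← heq, hsρ']))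
  · rintro rfl
    have hs' : s = n - 1 := by
      simp only [s, degree_top_fin, Nat.cast_pred (by omega : 0 < n)]
      rw [show 2 * (n : ℝ) - 2 - (n - 1) = n - 1 by ring, sqrt_mul_self (by linarith)]
    rw [hs', div_self (by linarith), DEE_top hn]

end DistanceEstrada
end

section
/- Let G be an r-regular simple graph on n vertices with diameter at most 2. Then DEE(G) = e^{2n-r-2} - e^{n-r-2} + e^{-1}·EE(G̅), where G̅ is the complement of G. -/
/-!
For a connected graph of diameter at most two, distinct vertices are at distance 1 or 2 according
as they are adjacent in `G` or in `Gᶜ`, so `D(G) = A(Gᶜ) - I + J` with `J` the all-ones matrix.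
If `G` is `r`-regular, `Gᶜ` is `(n-1-r)`-regular, hence `A(Gᶜ)` commutes with `J` and
`A(Gᶜ) J = (n-1-r) J`. Therefore `exp D = e⁻¹ exp A(Gᶜ) exp J` with `exp J = I + ((eⁿ - 1)/n) J`
(as `J² = n J`), and taking traces, `DEE(G) = e⁻¹ (EE(Gᶜ) + e^(n-1-r) (eⁿ - 1))`.
-/

namespace NormedSpace

variable {𝔸 : Type*} [NormedRing 𝔸] [NormedAlgebra ℝ 𝔸] [CompleteSpace 𝔸]

theorem exp_mul_eq_smul_of_mul_eq_smul {x y : 𝔸} {c : ℝ} (h : x * y = c • y) :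
    exp x * y = Real.exp c • y := by
  have hpow (k : ℕ) : x ^ k * y = c ^ k • y := by
    induction k with
    | zero => simp
    | succ k ih => rw [pow_succ', mul_assoc, ih, mul_smul_comm, h, smul_smul, pow_succ]
  have hx := (exp_series_hasSum_exp' (𝕂 := ℝ) x).mul_right y
  have hc := (exp_series_hasSum_exp' (𝕂 := ℝ) c).smul_const y
  simp_rw [smul_mul_assoc, hpow, smul_smul] at hx
  rw [← Real.exp_eq_exp_ℝ] at hc
  exact hx.unique hc

theorem exp_add_smul_one (x : 𝔸) (t : ℝ) : exp (x + t • 1) = Real.exp t • exp x := by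
  have hexp : exp (t • (1 : 𝔸)) = Real.exp t • 1 := by
    simpa using exp_mul_eq_smul_of_mul_eq_smul (mul_one (t • (1 : 𝔸)))
  have hball (z : 𝔸) : z ∈ Metric.eball 0 (expSeries ℝ 𝔸).radius := by
    simp [expSeries_radius_eq_top]
  rw [exp_add_of_commute_of_mem_ball ((Commute.one_right x).smul_right t) (hball _) (hball _),
    hexp, mul_smul_comm, mul_one]

theorem exp_eq_one_add_smul_of_mul_self_eq_smul {x : 𝔸} {a : ℝ} (ha : a ≠ 0)
    (h : x * x = a • x) : exp x = 1 + ((Real.exp a - 1) / a) • x := by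
  -- `p = a⁻¹ • x` is idempotent; `x` acts as `a` on `p` and as `0` on `1 - p`.
  set p := a⁻¹ • x
  have hp : x * p = a • p := by
    rw [mul_smul_comm, h, smul_comm]
  have hq : x * (1 - p) = (0 : ℝ) • (1 - p) := by
    rw [mul_sub, mul_one, hp, zero_smul, smul_inv_smul₀ ha, sub_self]
  calc exp x = exp x * p + exp x * (1 - p) := by rw [← mul_add, add_sub_cancel, mul_one]
    _ = Real.exp a • p + (1 - p) := by
      rw [exp_mul_eq_smul_of_mul_eq_smul hp, exp_mul_eq_smul_of_mul_eq_smul hq, Real.exp_zero,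
        one_smul]
    _ = 1 + ((Real.exp a - 1) / a) • x := by
      simp only [p, smul_smul, div_eq_mul_inv]
      module

end NormedSpace

theorem Matrix.IsHermitian.trace_exp {m : Type*} [Fintype m] [DecidableEq m]
    {A : Matrix m m ℝ} (hA : A.IsHermitian) :
    (NormedSpace.exp A).trace = ∑ i, Real.exp (hA.eigenvalues i) := by
  set U : Matrix m m ℝ := (hA.eigenvectorUnitary : Matrix m m ℝ)
  have hU : star U * U = 1 := Unitary.star_mul_self_of_mem hA.eigenvectorUnitary.2
  have hUinv : U⁻¹ = star U := Matrix.inv_eq_left_inv hU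
  conv_lhs => rw [hA.spectral_theorem, Unitary.conjStarAlgAut_apply, ← hUinv]
  have hUunit : IsUnit U := U.isUnit_iff_isUnit_det.mpr (Matrix.isUnit_det_of_left_inverse hU)
  rw [Matrix.exp_conj U _ hUunit, Matrix.trace_mul_cycle, hUinv, hU, one_mul,
    Matrix.exp_diagonal, Matrix.trace_diagonal]
  simp [Real.exp_eq_exp_ℝ]

namespace Matrix

variable {m : Type*} [Fintype m]

theorem of_one_mul_of_one {α : Type*} [NonAssocSemiring α] :
    (of 1 * of 1 : Matrix m m α) = (Fintype.card m : α) • of 1 := by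
  ext i j
  simp [mul_apply]

theorem trace_of_one {α : Type*} [AddCommMonoidWithOne α] :
    (of 1 : Matrix m m α).trace = Fintype.card m := by
  simp [trace]

theorem trace_exp_sub_one_add_of_one [DecidableEq m] [Nonempty m] {B : Matrix m m ℝ} {c : ℝ}
    (hBJ : B * of 1 = c • of 1) (hJB : of 1 * B = c • of 1) :
    (NormedSpace.exp (B - 1 + of 1)).trace =
      Real.exp (-1) *
        ((NormedSpace.exp B).trace + Real.exp c * (Real.exp (Fintype.card m) - 1)) := by
  have hcomm : Commute (B - 1) (of 1) := by
    rw [Commute, SemiconjBy, sub_mul, mul_sub, hBJ, hJB, one_mul, mul_one]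
  have hcard : (Fintype.card m : ℝ) ≠ 0 := by positivity
  -- Matrices carry no global norm: the Banach-algebra lemmas are applied with the operator norm.
  have hexp_sub : NormedSpace.exp (B - 1) = Real.exp (-1) • NormedSpace.exp B := by
    rw [sub_eq_add_neg, ← neg_one_smul ℝ (1 : Matrix m m ℝ)]
    exact open scoped Norms.Operator in NormedSpace.exp_add_smul_one B (-1)
  have hexp_of_one : NormedSpace.exp (of 1 : Matrix m m ℝ) =
      1 + ((Real.exp (Fintype.card m) - 1) / Fintype.card m) • of 1 :=
    open scoped Norms.Operator in
      NormedSpace.exp_eq_one_add_smul_of_mul_self_eq_smul hcard of_one_mul_of_one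
  have hexp_mul : NormedSpace.exp B * of 1 = Real.exp c • of 1 :=
    open scoped Norms.Operator in NormedSpace.exp_mul_eq_smul_of_mul_eq_smul hBJ
  rw [exp_add_of_commute _ _ hcomm, hexp_sub, hexp_of_one, smul_mul_assoc, mul_add, mul_one,
    mul_smul_comm, hexp_mul, trace_smul, trace_add, trace_smul, trace_smul, trace_of_one,
    smul_eq_mul, smul_eq_mul, smul_eq_mul]
  field_simp

end Matrix

namespace DistanceEstrada

variable {n : ℕ}

open Matrix

theorem adjMat_eq_adjMatrix (G : SimpleGraph (Fin n)) [DecidableRel G.Adj] :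
    adjMat G = G.adjMatrix ℝ := by
  ext i j
  simp [adjMat, SimpleGraph.adjMatrix_apply]

theorem adjMat_mul_of_one {G : SimpleGraph (Fin n)} [DecidableRel G.Adj] {d : ℕ}
    (hG : G.IsRegularOfDegree d) : adjMat G * of 1 = (d : ℝ) • of 1 := by
  ext i j
  have := SimpleGraph.adjMatrix_mulVec_const_apply_of_regular (α := ℝ) (a := 1) hG (v := i)
  simpa [adjMat_eq_adjMatrix, mul_apply, mulVec, dotProduct] using this

theorem of_one_mul_adjMat {G : SimpleGraph (Fin n)} [DecidableRel G.Adj] {d : ℕ}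
    (hG : G.IsRegularOfDegree d) : of 1 * adjMat G = (d : ℝ) • of 1 := by
  have hJ : (of 1 : Matrix (Fin n) (Fin n) ℝ)ᵀ = of 1 := rfl
  have hA : (adjMat G)ᵀ = adjMat G := by
    rw [adjMat_eq_adjMatrix, SimpleGraph.transpose_adjMatrix]
  have h := congrArg transpose (adjMat_mul_of_one hG)
  rwa [transpose_mul, transpose_smul, hJ, hA] at h

theorem distMatrix_eq_of_diam_le_two {G : SimpleGraph (Fin n)} (hconn : G.Connected)
    (hdiam : G.diam ≤ 2) : distMatrix G = adjMat Gᶜ - 1 + of 1 := by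
  have : Nonempty (Fin n) := hconn.nonempty
  have hediam : G.ediam ≠ ⊤ := G.connected_iff_ediam_ne_top.mp hconn
  ext i j
  rcases eq_or_ne i j with rfl | hij
  · simp [distMatrix, adjMat]
  by_cases hadj : G.Adj i j
  · simp [distMatrix, adjMat, hadj, hij, SimpleGraph.dist_eq_one_iff_adj.mpr hadj]
  · have hpos := hconn.pos_dist_of_ne hij
    have hle := (G.dist_le_diam hediam (u := i) (v := j)).trans hdiam
    have hne := mt SimpleGraph.dist_eq_one_iff_adj.mp hadj
    have h2 : G.dist i j = 2 := by omega
    simp [distMatrix, adjMat, hadj, hij, h2]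
    norm_num

/-- **Theorem 6 (Shang).** If `G` is an `r`-regular graph on `n` vertices with diameter at most 2,
then `DEE(G) = e^{2n-r-2} - e^{n-r-2} + e⁻¹ EE(G̅)`. -/
theorem distance_estrada_of_regular_diam_two {n : ℕ} (G : SimpleGraph (Fin n))
    [DecidableRel G.Adj] (r : ℕ) (hreg : G.IsRegularOfDegree r)
    (hconn : G.Connected) (hdiam : G.diam ≤ 2) :
    DEE G = Real.exp (2 * (n : ℝ) - r - 2) - Real.exp ((n : ℝ) - r - 2) +
      Real.exp (-1) * EE Gᶜ := by
  have : Nonempty (Fin n) := hconn.nonempty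
  have hrn : r < n :=
    hconn.nonempty.elim fun v => by simpa [hreg v] using G.degree_lt_card_verts v
  have hcompl : Gᶜ.IsRegularOfDegree (n - 1 - r) := by simpa using hreg.compl
  have hDEE : DEE G = (NormedSpace.exp (distMatrix G)).trace :=
    (distMatrix_isHermitian G).trace_exp.symm
  have hEE : EE Gᶜ = (NormedSpace.exp (adjMat Gᶜ)).trace :=
    (adjMat_isHermitian Gᶜ).trace_exp.symm
  rw [hDEE, distMatrix_eq_of_diam_le_two hconn hdiam,
    trace_exp_sub_one_add_of_one (adjMat_mul_of_one hcompl) (of_one_mul_adjMat hcompl), ← hEE,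
    Fintype.card_fin, Nat.cast_sub (by omega), Nat.cast_sub (by omega), Nat.cast_one,
    show 2 * (n : ℝ) - r - 2 = -1 + (n - 1 - r) + n by ring,
    show (n : ℝ) - r - 2 = -1 + (n - 1 - r) by ring, Real.exp_add, Real.exp_add]
  ring

end DistanceEstrada
end

section
/- Let G be a connected simple graph on n vertices with maximum degree Δ₁ and second maximum degree Δ₂. Then the largest distance eigenvalue satisfies λ_1(D) ≥ √((2n-2-Δ₁)(2n-2-Δ₂)), with equality if and only if G is a regular graph with diameter at most 2. -/
open Matrix Finset

theorem mul_sqrt_mul_le_add_mul {a b m : ℝ} (ha : 0 ≤ a) (hab : a ≤ b) (hm : 2 ≤ m) :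
    m * √(a * b) ≤ a + (m - 1) * b ∧ (m * √(a * b) = a + (m - 1) * b ↔ a = b) := by
  have hs : √(a * b) ^ 2 = a * b := Real.sq_sqrt (mul_nonneg ha (ha.trans hab))
  have hs0 : 0 ≤ √(a * b) := Real.sqrt_nonneg _
  -- the gap is `(a + b - 2 √(ab)) + (m - 2) (b - √(ab))`, a sum of two nonnegative terms
  have hamgm : 2 * √(a * b) ≤ a + b := by nlinarith [sq_nonneg (a - b)]
  have hle_b : √(a * b) ≤ b := by nlinarith
  refine ⟨by nlinarith, fun h => ?_, fun h => ?_⟩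
  · have hamgm_eq : a + b = 2 * √(a * b) := by nlinarith
    nlinarith [sq_nonneg (a - b)]
  · subst h
    rw [Real.sqrt_mul_self ha]
    ring

theorem Finset.add_card_sub_one_nsmul_le_sum {ι M : Type*} [Fintype ι] [DecidableEq ι]
    [AddCommMonoid M] [PartialOrder M] [IsOrderedCancelAddMonoid M] {f : ι → M} {c : M} {u : ι}
    (h : ∀ w ≠ u, c ≤ f w) :
    f u + (Fintype.card ι - 1) • c ≤ ∑ w, f w ∧
      (f u + (Fintype.card ι - 1) • c = ∑ w, f w ↔ ∀ w ≠ u, f w = c) := by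
  have hc : (Fintype.card ι - 1) • c = ∑ w ∈ univ.erase u, c := by
    rw [sum_const, card_erase_of_mem (mem_univ u), card_univ]
  have hle : ∀ w ∈ univ.erase u, c ≤ f w := fun w hw => h w (ne_of_mem_erase hw)
  rw [← add_sum_erase univ f (mem_univ u), hc, add_left_cancel_iff]
  refine ⟨add_le_add le_rfl (sum_le_sum hle), ?_⟩
  rw [sum_eq_sum_iff_of_le hle]
  simp only [mem_erase, mem_univ, and_true, eq_comm]

open scoped MatrixOrder ComplexOrder in
theorem Matrix.IsHermitian.dotProduct_mulVec_le {ι 𝕜 : Type*} [RCLike 𝕜] [Fintype ι]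
    [DecidableEq ι] {A : Matrix ι ι 𝕜} (hA : A.IsHermitian) {t : ℝ}
    (ht : ∀ i, hA.eigenvalues i ≤ t) (x : ι → 𝕜) :
    star x ⬝ᵥ A *ᵥ x ≤ t * (star x ⬝ᵥ x) := by
  have hle : A ≤ algebraMap ℝ (Matrix ι ι 𝕜) t := by
    refine le_algebraMap_of_spectrum_le ?_ hA
    rw [hA.spectrum_real_eq_range_eigenvalues]
    rintro _ ⟨i, rfl⟩
    exact ht i
  have := (Matrix.le_iff.mp hle).dotProduct_mulVec_nonneg x
  rw [sub_mulVec, dotProduct_sub, sub_nonneg, Algebra.algebraMap_eq_smul_one, smul_mulVec,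
    one_mulVec, dotProduct_smul] at this
  simpa [RCLike.real_smul_eq_coe_mul] using this

theorem Matrix.IsHermitian.hasEigenvalue_eigenvalues {ι : Type*} [Fintype ι] [DecidableEq ι]
    {A : Matrix ι ι ℝ} (hA : A.IsHermitian) (i : ι) :
    Module.End.HasEigenvalue (toLin' A) (hA.eigenvalues i) :=
  Module.End.hasEigenvalue_iff_mem_spectrum.mpr <|
    (spectrum_toLin' A).symm ▸ hA.eigenvalues_mem_spectrum_real i

theorem Matrix.le_of_hasEigenvalue_of_sum_row_le {ι : Type*} [Fintype ι] [DecidableEq ι]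
    {A : Matrix ι ι ℝ} (hA : ∀ i j, 0 ≤ A i j) {r : ℝ} (hr : ∀ i, ∑ j, A i j ≤ r) {μ : ℝ}
    (hμ : Module.End.HasEigenvalue (toLin' A) μ) : μ ≤ r := by
  obtain ⟨k, hk⟩ := eigenvalue_mem_ball hμ
  rw [Metric.mem_closedBall, Real.dist_eq] at hk
  calc μ ≤ A k k + ∑ j ∈ univ.erase k, ‖A k j‖ := by linarith [le_abs_self (μ - A k k)]
    _ = ∑ j, A k j := by
      simp only [Real.norm_of_nonneg (hA k _), add_sum_erase _ _ (mem_univ k)]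
    _ ≤ r := hr k

namespace SimpleGraph

variable {V : Type*} {G : SimpleGraph V}

theorem Connected.ite_sub_ite_adj_le_dist [DecidableEq V] [DecidableRel G.Adj]
    (hconn : G.Connected) (v w : V) :
    ((if v = w then 0 else 2) - if G.Adj v w then 1 else 0 : ℝ) ≤ G.dist v w ∧
      (((if v = w then 0 else 2) - if G.Adj v w then 1 else 0 : ℝ) = G.dist v w ↔
        G.dist v w ≤ 2) := by
  by_cases hvw : v = w
  · subst hvw
    simp
  by_cases hadj : G.Adj v w
  · norm_num [hvw, hadj, dist_eq_one_iff_adj.mpr hadj]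
  · have h2 : 2 ≤ G.dist v w := hconn.one_lt_dist_of_ne_of_not_adj hvw hadj
    simp only [hvw, hadj, if_false, sub_zero, Nat.ofNat_le_cast, h2, true_and]
    norm_cast
    omega

variable [Fintype V]

theorem Connected.diam_le_iff (hconn : G.Connected) {k : ℕ} :
    G.diam ≤ k ↔ ∀ u v, G.dist u v ≤ k := by
  have : Nonempty V := hconn.nonempty
  refine ⟨fun h u v => (dist_le_diam ?_).trans h, fun h => ?_⟩
  · exact connected_iff_ediam_ne_top.mp hconn
  · obtain ⟨u, v, huv⟩ := G.exists_dist_eq_diam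
    exact huv ▸ h u v

noncomputable def transmission (G : SimpleGraph V) (v : V) : ℕ :=
  ∑ w, G.dist v w

variable [DecidableEq V] [DecidableRel G.Adj]

theorem Connected.two_mul_card_sub_two_sub_degree_le_transmission (hconn : G.Connected) (v : V) :
    2 * (Fintype.card V : ℝ) - 2 - G.degree v ≤ G.transmission v ∧
      (2 * (Fintype.card V : ℝ) - 2 - G.degree v = G.transmission v ↔ ∀ w, G.dist v w ≤ 2) := by
  have hsum : ∑ w, ((if v = w then 0 else 2) - if G.Adj v w then 1 else 0 : ℝ) =
      2 * (Fintype.card V : ℝ) - 2 - G.degree v := by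
    have hne : #{w | ¬v = w} = Fintype.card V - 1 := by
      simp only [← ne_eq, filter_ne, mem_univ, card_erase_of_mem, card_univ]
    have hpos : 1 ≤ Fintype.card V := Fintype.card_pos_iff.mpr ⟨v⟩
    simp only [sum_sub_distrib, sum_ite, sum_const_zero, sum_const, zero_add, nsmul_eq_mul,
      mul_one, hne, ← neighborFinset_eq_filter, card_neighborFinset_eq_degree, Nat.cast_sub hpos]
    ring
  rw [← hsum, transmission, Nat.cast_sum]
  exact ⟨sum_le_sum fun w _ => (hconn.ite_sub_ite_adj_le_dist v w).1,
    (sum_eq_sum_iff_of_le fun w _ => (hconn.ite_sub_ite_adj_le_dist v w).1).trans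
      (by simp only [mem_univ, true_implies, (hconn.ite_sub_ite_adj_le_dist v _).2])⟩

theorem card_mul_sqrt_le_sum_sub_degree {Δ₁ Δ₂ : ℕ} {u v : V} (hvu : v ≠ u)
    (hu : G.degree u = Δ₁) (hv : G.degree v = Δ₂) (hmax : ∀ w, G.degree w ≤ Δ₁)
    (hsec : ∀ w ≠ u, G.degree w ≤ Δ₂) :
    (Fintype.card V : ℝ) * √((2 * (Fintype.card V : ℝ) - 2 - Δ₁) *
        (2 * (Fintype.card V : ℝ) - 2 - Δ₂)) ≤
      ∑ w, (2 * (Fintype.card V : ℝ) - 2 - G.degree w) ∧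
    ((Fintype.card V : ℝ) * √((2 * (Fintype.card V : ℝ) - 2 - Δ₁) *
        (2 * (Fintype.card V : ℝ) - 2 - Δ₂)) =
      ∑ w, (2 * (Fintype.card V : ℝ) - 2 - G.degree w) ↔ ∃ r, G.IsRegularOfDegree r) := by
  set N : ℝ := (Fintype.card V : ℝ) with hNdef
  have hN : (2 : ℝ) ≤ N := by
    rw [hNdef]
    exact_mod_cast (Fintype.one_lt_card_iff.mpr ⟨v, u, hvu⟩ : 2 ≤ Fintype.card V)
  have hΔ₁ : (Δ₁ : ℝ) + 1 ≤ N := by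
    rw [hNdef]
    exact_mod_cast (hu ▸ G.degree_lt_card_verts u : Δ₁ + 1 ≤ Fintype.card V)
  have hΔ₂ : (Δ₂ : ℝ) ≤ Δ₁ := by exact_mod_cast hv ▸ hmax v
  obtain ⟨hamgm, hamgm_eq⟩ := mul_sqrt_mul_le_add_mul (a := 2 * N - 2 - Δ₁)
    (b := 2 * N - 2 - Δ₂) (m := N) (by linarith) (by linarith) hN
  obtain ⟨hsum, hsum_eq⟩ := add_card_sub_one_nsmul_le_sum (f := fun w => 2 * N - 2 - G.degree w)
    (c := 2 * N - 2 - Δ₂) (u := u) fun w hw => sub_le_sub_left (Nat.cast_le.mpr (hsec w hw)) _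
  simp only [hu, nsmul_eq_mul, Nat.cast_pred (Fintype.card_pos_iff.mpr ⟨u⟩), ← hNdef,
    sub_right_inj, Nat.cast_inj] at hsum hsum_eq hamgm_eq
  refine ⟨hamgm.trans hsum, fun h => ⟨Δ₂, fun w => ?_⟩, fun ⟨r, hr⟩ => ?_⟩
  · by_cases hw : w = u
    · exact hw ▸ hu.trans (hamgm_eq.1 (by linarith))
    · exact hsum_eq.1 (by linarith) w hw
  · have hΔ : Δ₁ = Δ₂ := hu ▸ hv ▸ (hr u).trans (hr v).symm
    linarith [hamgm_eq.2 hΔ, hsum_eq.2 fun w _ => by rw [hr w, ← hv, hr v]]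

end SimpleGraph

namespace DistanceEstrada

open SimpleGraph

section

variable {n : ℕ} (G : SimpleGraph (Fin n))

theorem sum_transmission_le_card_mul {t : ℝ} (ht : ∀ i, distEig G i ≤ t) :
    ∑ v, (G.transmission v : ℝ) ≤ n * t := by
  rw [mul_comm]
  have := (distMatrix_isHermitian G).dotProduct_mulVec_le ht (fun _ => 1)
  simpa [distMatrix, transmission, dotProduct, mulVec] using this

theorem distEig_le_of_transmission_le {c : ℝ} (hc : ∀ v, (G.transmission v : ℝ) ≤ c) (i : Fin n) :
    distEig G i ≤ c :=
  le_of_hasEigenvalue_of_sum_row_le (fun _ _ => Nat.cast_nonneg _)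
    (by simpa [distMatrix, transmission] using hc)
    ((distMatrix_isHermitian G).hasEigenvalue_eigenvalues i)

end

/-- **Lemma 3.** For a connected graph `G` on `n` vertices with maximum degree `Δ₁` and second
maximum degree `Δ₂`, the largest distance eigenvalue satisfies
`λ₁(D) ≥ √((2n-2-Δ₁)(2n-2-Δ₂))`, with equality iff `G` is regular with diameter at most 2. -/
theorem largest_distance_eigenvalue_lower_bound {n : ℕ} (G : SimpleGraph (Fin n))
    [DecidableRel G.Adj] (hconn : G.Connected) (Δ₁ Δ₂ : ℕ)
    (hΔ : ∃ u : Fin n, G.degree u = Δ₁ ∧ (∀ w, G.degree w ≤ Δ₁) ∧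
      (∃ v, v ≠ u ∧ G.degree v = Δ₂) ∧ ∀ w, w ≠ u → G.degree w ≤ Δ₂)
    (lam1 : ℝ) (hlam1 : IsGreatest (Set.range (distEig G)) lam1) :
    Real.sqrt ((2 * (n : ℝ) - 2 - Δ₁) * (2 * (n : ℝ) - 2 - Δ₂)) ≤ lam1 ∧
    (Real.sqrt ((2 * (n : ℝ) - 2 - Δ₁) * (2 * (n : ℝ) - 2 - Δ₂)) = lam1 ↔
      (∃ r : ℕ, G.IsRegularOfDegree r) ∧ G.diam ≤ 2) := by
  obtain ⟨u, hu, hmax, ⟨v, hvu, hv⟩, hsec⟩ := hΔ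
  obtain ⟨hdeg, hdeg_eq⟩ := card_mul_sqrt_le_sum_sub_degree hvu hu hv hmax hsec
  have htr := hconn.two_mul_card_sub_two_sub_degree_le_transmission
  simp only [Fintype.card_fin] at hdeg hdeg_eq htr
  have hsum_tr : ∑ w, (2 * (n : ℝ) - 2 - G.degree w) ≤ ∑ w, (G.transmission w : ℝ) :=
    sum_le_sum fun w _ => (htr w).1
  have hray := sum_transmission_le_card_mul G fun i => hlam1.2 ⟨i, rfl⟩
  have hn : (0 : ℝ) < n := Nat.cast_pos.mpr u.pos
  have hlow := le_of_mul_le_mul_left (hdeg.trans (hsum_tr.trans hray)) hn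
  refine ⟨hlow, fun heq => ?_, fun ⟨⟨r, hr⟩, hdiam⟩ => ?_⟩
  · subst heq
    have hrows := (sum_eq_sum_iff_of_le fun w _ => (htr w).1).1 (by linarith)
    exact ⟨hdeg_eq.1 (by linarith),
      hconn.diam_le_iff.2 fun v w => (htr v).2.1 (hrows v (mem_univ v)) w⟩
  · have hTr (v : Fin n) : (G.transmission v : ℝ) = 2 * n - 2 - r :=
      hr v ▸ ((htr v).2.2 fun w => hconn.diam_le_iff.1 hdiam v w).symm
    obtain ⟨i, rfl⟩ := hlam1.1
    obtain rfl : Δ₁ = r := hu ▸ hr u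
    obtain rfl : Δ₂ = Δ₁ := hv ▸ hr v
    rw [Real.sqrt_mul_self (by linarith [hTr u, (G.transmission u).cast_nonneg (α := ℝ)])] at hlow ⊢
    exact le_antisymm hlow (distEig_le_of_transmission_le G (fun v => (hTr v).le) i)

end DistanceEstrada
end

section
/- Let G be a connected simple graph on n ≥ 3 vertices. The smallest distance eigenvalue λ_n(D) equals -2 if and only if G is a complete s-partite graph K_{n_1,...,n_s} for some s with 2 ≤ s ≤ n-1 and n_1 + ... + n_s = n. -/
namespace Matrix

variable {ι : Type*} [DecidableEq ι] {A : Matrix ι ι ℝ}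

theorem IsHermitian.posSemidef_sub_smul_one_iff [Fintype ι] (hA : A.IsHermitian) (c : ℝ) :
    (A - c • 1).PosSemidef ↔ ∀ μ ∈ spectrum ℝ A, c ≤ μ := by
  have hAc : (A - c • 1).IsHermitian := hA.sub (isHermitian_one.smul (.all c))
  have hσ : spectrum ℝ (A - c • 1) = (· - c) '' spectrum ℝ A := by
    rw [← Algebra.algebraMap_eq_smul_one, ← spectrum.sub_singleton_eq, Set.sub_singleton]
  calc (A - c • 1).PosSemidef ↔ ∀ μ ∈ spectrum ℝ (A - c • 1), 0 ≤ μ := by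
        rw [hAc.posSemidef_iff_eigenvalues_nonneg, hAc.spectrum_real_eq_range_eigenvalues,
          Set.forall_mem_range, Pi.le_def]
        rfl
    _ ↔ ∀ μ ∈ spectrum ℝ A, c ≤ μ := by simp only [hσ, Set.forall_mem_image, sub_nonneg]

theorem IsHermitian.le_iff_posSemidef_sub_smul_one [Fintype ι] (hA : A.IsHermitian) {l : ℝ}
    (hl : IsLeast (spectrum ℝ A) l) (c : ℝ) : c ≤ l ↔ (A - c • 1).PosSemidef := by
  rw [hA.posSemidef_sub_smul_one_iff, ← mem_lowerBounds]
  exact le_isGLB_iff hl.isGLB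

theorem PosSemidef.two_mul_le_of_sub_smul_one {c : ℝ} (h : (A - c • 1).PosSemidef) {u v : ι}
    (huv : u ≠ v) : 2 * c ≤ A u u + A v v - A u v - A v u := by
  have hq := (h.submatrix ![u, v]).dotProduct_mulVec_nonneg ![1, -1]
  simp only [dotProduct, mulVec, Fin.sum_univ_two, submatrix_apply, Matrix.sub_apply,
    Matrix.smul_apply, one_apply, smul_eq_mul, mul_one, mul_zero, huv, huv.symm, star_trivial,
    cons_val_zero, cons_val_one, cons_val_fin_one, if_true, if_false, sub_zero] at hq
  linarith

theorem PosSemidef.six_mul_le_of_sub_smul_one {c : ℝ} (h : (A - c • 1).PosSemidef) {u v w : ι}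
    (huv : u ≠ v) (hvw : v ≠ w) (huw : u ≠ w) :
    6 * c ≤ A u u + 4 * A v v + A w w - 2 * (A u v + A v u) - 2 * (A v w + A w v)
      + (A u w + A w u) := by
  have hq := (h.submatrix ![u, v, w]).dotProduct_mulVec_nonneg ![1, -2, 1]
  simp only [dotProduct, mulVec, Fin.sum_univ_three, submatrix_apply, Matrix.sub_apply,
    Matrix.smul_apply, one_apply, smul_eq_mul, mul_one, mul_zero, huv, huv.symm, hvw, hvw.symm,
    huw, huw.symm, star_trivial, cons_val_zero, cons_val_one, cons_val, if_true, if_false,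
    sub_zero] at hq
  linarith

end Matrix

namespace SimpleGraph

variable {V : Type*} {G : SimpleGraph V}

theorem dist_eq_two_of_adj_iff_ne {κ : Type*} [Nontrivial κ] {P : V → κ}
    (hP : Function.Surjective P) (hadj : ∀ u v, G.Adj u v ↔ P u ≠ P v) {u v : V} (huv : u ≠ v)
    (hPuv : P u = P v) : G.dist u v = 2 := by
  obtain ⟨k, hk⟩ := exists_ne (P u)
  obtain ⟨w, rfl⟩ := hP k
  let p : G.Walk u v :=
    .cons ((hadj u w).2 hk.symm) (.cons ((hadj w v).2 (hPuv ▸ hk)) .nil)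
  have h1 : 1 < G.dist u v :=
    p.reachable.one_lt_dist_of_ne_of_not_adj huv fun h => (hadj u v).1 h hPuv
  have h2 : G.dist u v ≤ 2 := G.dist_le p
  omega

theorem IsCompleteMultipartite.exists_fin_partition [Finite V] (h : G.IsCompleteMultipartite) :
    ∃ (s : ℕ) (P : V → Fin s), Function.Surjective P ∧ ∀ u v, G.Adj u v ↔ P u ≠ P v := by
  obtain ⟨s, ⟨e⟩⟩ := Finite.exists_equiv_fin (Quotient h.setoid)
  refine ⟨s, fun v => e (Quotient.mk _ v), e.surjective.comp Quotient.mk_surjective,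
    fun u v => ?_⟩
  rw [ne_eq, e.apply_eq_iff_eq, Quotient.eq]
  exact not_not.symm

end SimpleGraph

namespace DistanceEstrada

open Matrix

section

variable {n : ℕ} {G : SimpleGraph (Fin n)}

theorem isCompleteMultipartite_of_posSemidef_distMatrix_add_two (hG : G.Connected)
    (h : (distMatrix G - (-2 : ℝ) • 1).PosSemidef) : G.IsCompleteMultipartite := by
  refine ⟨fun u v w huv hvw huw => ?_⟩
  have hne_uv : u ≠ v := by rintro rfl; exact hvw huw
  have hne_vw : v ≠ w := by rintro rfl; exact huv huw
  have h_uv : (2 : ℝ) ≤ G.dist u v := by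
    exact_mod_cast hG.one_lt_dist_of_ne_of_not_adj hne_uv huv
  have h_vw : (2 : ℝ) ≤ G.dist v w := by
    exact_mod_cast hG.one_lt_dist_of_ne_of_not_adj hne_vw hvw
  have hq := h.six_mul_le_of_sub_smul_one hne_uv hne_vw huw.ne
  simp only [distMatrix, SimpleGraph.dist_self, SimpleGraph.dist_comm (u := v) (v := u),
    SimpleGraph.dist_comm (u := w), SimpleGraph.dist_eq_one_iff_adj.2 huw] at hq
  push_cast at hq
  linarith

variable {κ : Type*} [Nontrivial κ] [DecidableEq κ] {P : Fin n → κ}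

theorem distMatrix_eq_of_adj_iff_ne (hP : Function.Surjective P)
    (hadj : ∀ u v, G.Adj u v ↔ P u ≠ P v) :
    distMatrix G = vecMulVec 1 1 + (1 : Matrix κ κ ℝ).submatrix P P - (2 : ℝ) • 1 := by
  ext u v
  by_cases huv : u = v
  · subst huv; norm_num [distMatrix]
  by_cases hPuv : P u = P v
  · norm_num [distMatrix, SimpleGraph.dist_eq_two_of_adj_iff_ne hP hadj huv hPuv, huv, hPuv,
      vecMulVec, one_apply]
  · simp [distMatrix, SimpleGraph.dist_eq_one_iff_adj.2 ((hadj u v).2 hPuv), huv, hPuv,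
      vecMulVec]

theorem posSemidef_distMatrix_add_two (hP : Function.Surjective P)
    (hadj : ∀ u v, G.Adj u v ↔ P u ≠ P v) : (distMatrix G - (-2 : ℝ) • 1).PosSemidef := by
  rw [distMatrix_eq_of_adj_iff_ne hP hadj, neg_smul, sub_neg_eq_add, sub_add_cancel]
  simpa using (posSemidef_vecMulVec_self_star (1 : Fin n → ℝ)).add (PosSemidef.one.submatrix P)

theorem posSemidef_distMatrix_add_one (hP : Function.Surjective P)
    (hadj : ∀ u v, G.Adj u v ↔ P u ≠ P v) (hinj : Function.Injective P) :
    (distMatrix G - (-1 : ℝ) • 1).PosSemidef := by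
  rw [distMatrix_eq_of_adj_iff_ne hP hadj, submatrix_one P hinj]
  convert posSemidef_vecMulVec_self_star (1 : Fin n → ℝ) using 1
  simp only [star_one]
  module

end

/-- **Lemma 4, second part.** For a connected graph `G` on `n ≥ 3` vertices, the smallest distance
eigenvalue equals `-2` iff `G` is a complete `s`-partite graph `K_{n₁,…,n_s}` for some
`2 ≤ s ≤ n - 1`. -/
theorem least_distance_eigenvalue_eq_neg_two_iff {n : ℕ} (hn : 3 ≤ n)
    (G : SimpleGraph (Fin n)) (hconn : G.Connected)
    (lamn : ℝ) (hlamn : IsLeast (Set.range (distEig G)) lamn) :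
    lamn = -2 ↔
      ∃ s : ℕ, 2 ≤ s ∧ s ≤ n - 1 ∧ ∃ P : Fin n → Fin s,
        Function.Surjective P ∧ ∀ u v : Fin n, G.Adj u v ↔ P u ≠ P v := by
  have hD := distMatrix_isHermitian G
  rw [distEig, ← hD.spectrum_real_eq_range_eigenvalues] at hlamn
  have hle := hD.le_iff_posSemidef_sub_smul_one hlamn
  constructor
  · rintro rfl
    obtain ⟨s, P, hP, hadj⟩ := (isCompleteMultipartite_of_posSemidef_distMatrix_add_two hconn
      ((hle _).1 le_rfl)).exists_fin_partition
    have : Nontrivial (Fin n) := Fin.nontrivial_iff_two_le.2 (by omega)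
    obtain ⟨u⟩ := hconn.nonempty
    obtain ⟨v, huv⟩ := hconn.preconnected.exists_adj_of_nontrivial u
    have : Nontrivial (Fin s) := ⟨⟨P u, P v, (hadj u v).1 huv⟩⟩
    have hP_not_inj : ¬ Function.Injective P := fun hinj =>
      absurd ((hle _).2 (posSemidef_distMatrix_add_one hP hadj hinj)) (by norm_num)
    have hsn : s ≤ n := by simpa using Fintype.card_le_of_surjective P hP
    refine ⟨s, Fin.nontrivial_iff_two_le.1 ‹_›, ?_, P, hP, hadj⟩
    by_contra hs
    exact hP_not_inj ((Fintype.bijective_iff_surjective_and_card P).2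
      ⟨hP, by simp only [Fintype.card_fin]; omega⟩).1
  · rintro ⟨s, hs, hsn, P, hP, hadj⟩
    have : Nontrivial (Fin s) := Fin.nontrivial_iff_two_le.2 hs
    obtain ⟨u, v, huv, hPuv⟩ :=
      Fintype.exists_ne_map_eq_of_card_lt P (by simp only [Fintype.card_fin]; omega)
    have h2 := ((hle lamn).1 le_rfl).two_mul_le_of_sub_smul_one huv
    simp only [distMatrix, SimpleGraph.dist_self,
      SimpleGraph.dist_eq_two_of_adj_iff_ne hP hadj huv hPuv,
      SimpleGraph.dist_eq_two_of_adj_iff_ne hP hadj huv.symm hPuv.symm] at h2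
    push_cast at h2
    exact le_antisymm (by linarith) ((hle _).2 (posSemidef_distMatrix_add_two hP hadj))

end DistanceEstrada
end
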